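/- For κ > 1 and all x > 0, g_κ(x) = Φ(√(1/κ)(κ−1)x) + e^{2x²}·Φ(−√(1/κ)(κ+1)x) > 1/2; in particular the minimum value g_κ(x₀(κ)) exceeds 1/2. -/

import Mathlib

noncomputable def Phi (y : ℝ) : ℝ :=
  (Real.sqrt (2 * Real.pi))⁻¹ * ∫ t in Set.Iic y, Real.exp (-t ^ 2 / 2)

noncomputable def gfun (κ x : ℝ) : ℝ :=
  Phi (Real.sqrt (1 / κ) * (κ - 1) * x) +
    Real.exp (2 * x ^ 2) * Phi (-(Real.sqrt (1 / κ) * (κ + 1) * x))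

/-! Since `Φ` is the cumulative distribution function of a symmetric density, `Φ y > 1/2` for
`y > 0`; the first summand of `g_κ(x)` has the positive argument `(κ - 1) x / √κ`, and the second
summand is positive. -/

open MeasureTheory Set Real

lemma exp_neg_sq_div_two_eq (t : ℝ) : exp (-t ^ 2 / 2) = exp (-(1 / 2) * t ^ 2) := by
  ring_nf

lemma integrable_exp_neg_sq_div_two : Integrable fun t : ℝ ↦ exp (-t ^ 2 / 2) := by
  simpa only [exp_neg_sq_div_two_eq] using
    integrable_exp_neg_mul_sq (by norm_num : (0 : ℝ) < 1 / 2)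

lemma integral_exp_neg_sq_div_two : ∫ t, exp (-t ^ 2 / 2) = √(2 * π) := by
  simp only [exp_neg_sq_div_two_eq, integral_gaussian]
  congr 1
  field_simp

lemma integral_Ioi_zero_exp_neg_sq_div_two : ∫ t in Ioi 0, exp (-t ^ 2 / 2) = √(2 * π) / 2 := by
  simp only [exp_neg_sq_div_two_eq, integral_gaussian_Ioi]
  rw [div_div_eq_mul_div, div_one, mul_comm]

lemma integral_Iic_zero_exp_neg_sq_div_two : ∫ t in Iic 0, exp (-t ^ 2 / 2) = √(2 * π) / 2 := by
  have hsplit := integral_add_compl (measurableSet_Iic (a := (0 : ℝ)))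
    integrable_exp_neg_sq_div_two
  rw [compl_Iic, integral_exp_neg_sq_div_two, integral_Ioi_zero_exp_neg_sq_div_two] at hsplit
  linarith

lemma Phi_pos (y : ℝ) : 0 < Phi y := by
  refine mul_pos (inv_pos.2 (sqrt_pos.2 (by positivity))) ?_
  rw [setIntegral_pos_iff_support_of_nonneg_ae (.of_forall fun t ↦ (exp_pos _).le)
    integrable_exp_neg_sq_div_two.integrableOn]
  simp [Function.support, (exp_pos _).ne']

lemma one_half_lt_Phi {y : ℝ} (hy : 0 < y) : 1 / 2 < Phi y := by
  have hmass : 0 < ∫ t in (0 : ℝ)..y, exp (-t ^ 2 / 2) :=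
    intervalIntegral.intervalIntegral_pos_of_pos
      integrable_exp_neg_sq_div_two.intervalIntegrable (fun _ ↦ exp_pos _) hy
  rw [← intervalIntegral.integral_Iic_sub_Iic integrable_exp_neg_sq_div_two.integrableOn
    integrable_exp_neg_sq_div_two.integrableOn, integral_Iic_zero_exp_neg_sq_div_two] at hmass
  have hc : 0 < √(2 * π) := sqrt_pos.2 (by positivity)
  rw [Phi, inv_mul_eq_div, lt_div_iff₀ hc]
  linarith

theorem stmt12 (κ : ℝ) (hκ : 1 < κ) (x : ℝ) (hx : 0 < x) :
    1 / 2 < gfun κ x := by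
  have harg : 0 < Real.sqrt (1 / κ) * (κ - 1) * x :=
    mul_pos (mul_pos (sqrt_pos.2 (by positivity)) (by linarith)) hx
  have htail : 0 < Real.exp (2 * x ^ 2) * Phi (-(Real.sqrt (1 / κ) * (κ + 1) * x)) :=
    mul_pos (exp_pos _) (Phi_pos _)
  have hhead := one_half_lt_Phi harg
  unfold gfun
  linarith
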